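/- Let (Ω, F, P) be a probability space, ρ ∈ (0,1), α > 0. Let v_t : Ω → ℝ (t ∈ ℕ₀) be nonnegative random variables and let k_n : Ω → ℕ₀ (n ∈ ℕ₀) be random variables such that almost surely (k_n) is strictly increasing with k_0 = 0 and (v_t) is a cycle-Lyapunov sequence for (ρ, α, (k_n)). Suppose v_0 is independent of the σ-algebra generated by (Δ_n)_{n≥1} and E[v_0] < ∞. If there exist μ > 0, K ∈ ℕ and q ∈ (0,1) such that E[Ξ(n)] ≤ μ · q^{n−1} for all n > K, and E[Ξ(n)] < ∞ for all n ≤ K, then Σ_{t=0}^{∞} E[v_t] < ∞. -/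

import Mathlib

open MeasureTheory
open scoped ENNReal

/-!
Along a trajectory, the cycle-Lyapunov inequalities give `v (k n) ≤ Ξ(n) v 0` at the start of each
cycle, and within cycle `n` the values decay geometrically from `α v (k n)`, so that cycle
contributes at most `α / (1 - ρ) · Ξ(n) v 0`. Summing over cycles, `∑ₜ vₜ ≤ v₀ + α / (1 - ρ) · v₀ ∑ₙ Ξ(n)`.
In expectation, independence of `v₀` from the cycle lengths factorises `E[v₀ ∑ₙ Ξ(n)]`, and
`∑ₙ E[Ξ(n)]` is finite because `E[Ξ(n)]` is eventually geometric.
-/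

/-- `v : ℕ → ℝ` is a cycle-Lyapunov sequence for `(ρ, α, k)`: it is nonnegative, satisfies
`v (k n + 1) ≤ α * v (k n)` at the start of each cycle, and contracts by `ρ` at every step
`t` with `k n + 1 ≤ t ≤ k (n+1) - 1` within a cycle. -/
def IsCycleLyapunov (ρ α : ℝ) (k : ℕ → ℕ) (v : ℕ → ℝ) : Prop :=
  (∀ t, 0 ≤ v t) ∧
  (∀ n, v (k n + 1) ≤ α * v (k n)) ∧
  (∀ n t, k n + 1 ≤ t → t < k (n + 1) → v (t + 1) ≤ ρ * v t)

/-- `Ξ(n) = α^n · ρ^{Σ_{i=1}^{n} (Δ_i − 1)}` where `Δ_i = k i − k (i−1)`; in particular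
`Ξ(0) = 1` (empty sum). -/
noncomputable def Xi (ρ α : ℝ) (k : ℕ → ℕ) (n : ℕ) : ℝ :=
  α ^ n * ρ ^ (∑ i ∈ Finset.range n, (k (i + 1) - k i - 1))

lemma ENNReal.tsum_lt_top_of_le_geometric {f : ℕ → ℝ≥0∞} {C r : ℝ≥0∞} {K : ℕ} (hC : C ≠ ⊤)
    (hr : r < 1) (hfin : ∀ n ≤ K, f n < ⊤) (hgeom : ∀ n, K < n → f n ≤ C * r ^ (n - 1)) :
    ∑' n, f n < ⊤ := by
  rw [← ENNReal.summable.sum_add_tsum_nat_add' (k := K + 1)]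
  refine ENNReal.add_lt_top.2 ⟨ENNReal.sum_lt_top.2 fun n hn => hfin n ?_, ?_⟩
  · simp only [Finset.mem_range] at hn
    omega
  calc ∑' n, f (n + (K + 1)) ≤ ∑' n, C * r ^ K * r ^ n := by
        refine ENNReal.tsum_le_tsum fun n => (hgeom _ (by omega)).trans_eq ?_
        rw [show n + (K + 1) - 1 = K + n by omega, pow_add, mul_assoc]
    _ = C * r ^ K * (1 - r)⁻¹ := by rw [ENNReal.tsum_mul_left, ENNReal.tsum_geometric]
    _ < ⊤ := ENNReal.mul_lt_top (ENNReal.mul_lt_top hC.lt_top (ENNReal.pow_ne_top hr.ne_top).lt_top)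
        (ENNReal.inv_lt_top.2 (tsub_pos_of_lt hr))

lemma Xi_succ (ρ α : ℝ) (k : ℕ → ℕ) (n : ℕ) :
    Xi ρ α k (n + 1) = Xi ρ α k n * (α * ρ ^ (k (n + 1) - k n - 1)) := by
  rw [Xi, Xi, Finset.sum_range_succ, pow_succ, pow_add]
  ring

lemma measurable_Xi {Ω : Type*} (k : ℕ → Ω → ℕ) (ρ α : ℝ) (n : ℕ) :
    Measurable[⨆ i, MeasurableSpace.comap (fun ω => k (i + 1) ω - k i ω) inferInstance]
      fun ω => Xi ρ α (fun j => k j ω) n :=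
  (measurable_from_nat (f := fun s : ℕ => α ^ n * ρ ^ s)).comp <|
    Finset.measurable_sum _ fun i _ => (measurable_from_nat (f := fun d : ℕ => d - 1)).comp <|
      Measurable.of_comap_le (le_iSup (fun i => MeasurableSpace.comap
        (fun ω => k (i + 1) ω - k i ω) inferInstance) i)

lemma measurable_tsum_ofReal_Xi {Ω : Type*} (k : ℕ → Ω → ℕ) (ρ α : ℝ) :
    Measurable[⨆ i, MeasurableSpace.comap (fun ω => k (i + 1) ω - k i ω) inferInstance]
      fun ω => ∑' n, ENNReal.ofReal (Xi ρ α (fun j => k j ω) n) := by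
  let _ : MeasurableSpace Ω :=
    ⨆ i, MeasurableSpace.comap (fun ω => k (i + 1) ω - k i ω) inferInstance
  exact Measurable.tsum fun n => (measurable_Xi k ρ α n).ennreal_ofReal

namespace IsCycleLyapunov

variable {ρ α : ℝ} {k : ℕ → ℕ} {v : ℕ → ℝ}

lemma le_mul_pow_within_cycle (hρ : 0 ≤ ρ) (hL : IsCycleLyapunov ρ α k v) {n j : ℕ}
    (hj : k n + 1 + j ≤ k (n + 1)) : v (k n + 1 + j) ≤ α * ρ ^ j * v (k n) := by
  induction j with
  | zero => simpa using hL.2.1 n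
  | succ j ih =>
    calc v (k n + 1 + j + 1) ≤ ρ * v (k n + 1 + j) := hL.2.2 n _ (by omega) (by omega)
      _ ≤ ρ * (α * ρ ^ j * v (k n)) := by gcongr; exact ih (by omega)
      _ = α * ρ ^ (j + 1) * v (k n) := by ring

lemma le_Xi_mul (hρ : 0 ≤ ρ) (hα : 0 ≤ α) (hk : StrictMono k) (hk0 : k 0 = 0)
    (hL : IsCycleLyapunov ρ α k v) (n : ℕ) : v (k n) ≤ Xi ρ α k n * v 0 := by
  induction n with
  | zero => simp [Xi, hk0]
  | succ n ih =>
    have hend : k n + 1 + (k (n + 1) - k n - 1) = k (n + 1) := by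
      have := hk (show n < n + 1 by omega)
      omega
    calc v (k (n + 1)) ≤ α * ρ ^ (k (n + 1) - k n - 1) * v (k n) := by
          simpa only [hend] using hL.le_mul_pow_within_cycle hρ hend.le
      _ ≤ α * ρ ^ (k (n + 1) - k n - 1) * (Xi ρ α k n * v 0) := by gcongr
      _ = Xi ρ α k (n + 1) * v 0 := by rw [Xi_succ]; ring

lemma sum_cycle_le (hρ : 0 ≤ ρ) (hρ1 : ρ < 1) (hα : 0 ≤ α) (hL : IsCycleLyapunov ρ α k v)
    (n : ℕ) : ∑ t ∈ Finset.Ico (k n + 1) (k (n + 1) + 1), v t ≤ α / (1 - ρ) * v (k n) := by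
  rw [Finset.sum_Ico_eq_sum_range]
  calc ∑ j ∈ Finset.range (k (n + 1) + 1 - (k n + 1)), v (k n + 1 + j)
      ≤ ∑ j ∈ Finset.range (k (n + 1) + 1 - (k n + 1)), α * ρ ^ j * v (k n) :=
        Finset.sum_le_sum fun j hj => hL.le_mul_pow_within_cycle hρ (by rw [Finset.mem_range] at hj; omega)
    _ = α * v (k n) * ∑ j ∈ Finset.range (k (n + 1) + 1 - (k n + 1)), ρ ^ j := by
        rw [Finset.mul_sum]
        exact Finset.sum_congr rfl fun j _ => by ring
    _ ≤ α * v (k n) * (1 / (1 - ρ)) := by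
        have hvk := hL.1 (k n)
        gcongr
        simpa using geom_sum_Ico_le_of_lt_one (m := 0) hρ hρ1
    _ = α / (1 - ρ) * v (k n) := by ring

lemma sum_range_le (hρ : 0 ≤ ρ) (hρ1 : ρ < 1) (hα : 0 ≤ α) (hk : StrictMono k) (hk0 : k 0 = 0)
    (hL : IsCycleLyapunov ρ α k v) (N : ℕ) :
    ∑ t ∈ Finset.range (k N + 1), v t
      ≤ v 0 + α / (1 - ρ) * (v 0 * ∑ n ∈ Finset.range N, Xi ρ α k n) := by
  induction N with
  | zero => simp [hk0]
  | succ N ih =>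
    have hXi := hL.le_Xi_mul hρ hα hk hk0 N
    have hc : 0 ≤ α / (1 - ρ) := div_nonneg hα (by linarith)
    have hle : k N + 1 ≤ k (N + 1) + 1 := by
      have := hk (show N < N + 1 by omega)
      omega
    rw [← Finset.sum_range_add_sum_Ico _ hle]
    calc ∑ t ∈ Finset.range (k N + 1), v t + ∑ t ∈ Finset.Ico (k N + 1) (k (N + 1) + 1), v t
        ≤ v 0 + α / (1 - ρ) * (v 0 * ∑ n ∈ Finset.range N, Xi ρ α k n)
          + α / (1 - ρ) * (Xi ρ α k N * v 0) := by
          gcongr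
          exact (hL.sum_cycle_le hρ hρ1 hα N).trans (by gcongr)
      _ = _ := by rw [Finset.sum_range_succ]; ring

lemma tsum_ofReal_le (hρ : 0 ≤ ρ) (hρ1 : ρ < 1) (hα : 0 ≤ α) (hk : StrictMono k) (hk0 : k 0 = 0)
    (hL : IsCycleLyapunov ρ α k v) :
    ∑' t, ENNReal.ofReal (v t) ≤ ENNReal.ofReal (v 0) + ENNReal.ofReal (α / (1 - ρ)) *
      (ENNReal.ofReal (v 0) * ∑' n, ENNReal.ofReal (Xi ρ α k n)) := by
  rw [ENNReal.tsum_eq_iSup_nat' (N := fun N => k N + 1)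
    ((Filter.tendsto_add_atTop_nat 1).comp hk.tendsto_atTop)]
  refine iSup_le fun N => ?_
  have hXi : ∀ n, 0 ≤ Xi ρ α k n := fun n => by unfold Xi; positivity
  calc ∑ t ∈ Finset.range (k N + 1), ENNReal.ofReal (v t)
      = ENNReal.ofReal (∑ t ∈ Finset.range (k N + 1), v t) :=
        (ENNReal.ofReal_sum_of_nonneg fun t _ => hL.1 t).symm
    _ ≤ ENNReal.ofReal (v 0 + α / (1 - ρ) * (v 0 * ∑ n ∈ Finset.range N, Xi ρ α k n)) :=
        ENNReal.ofReal_le_ofReal (hL.sum_range_le hρ hρ1 hα hk hk0 N)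
    _ = ENNReal.ofReal (v 0) + ENNReal.ofReal (α / (1 - ρ)) *
          (ENNReal.ofReal (v 0) * ∑ n ∈ Finset.range N, ENNReal.ofReal (Xi ρ α k n)) := by
        have hv0 := hL.1 0
        have hc : 0 ≤ α / (1 - ρ) := div_nonneg hα (by linarith)
        have hsum := Finset.sum_nonneg fun n (_ : n ∈ Finset.range N) => hXi n
        rw [ENNReal.ofReal_add hv0 (mul_nonneg hc (mul_nonneg hv0 hsum)), ENNReal.ofReal_mul hc,
          ENNReal.ofReal_mul hv0, ENNReal.ofReal_sum_of_nonneg fun n _ => hXi n]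
    _ ≤ _ := by gcongr; exact ENNReal.sum_le_tsum _

end IsCycleLyapunov

theorem stability_from_eventually_geometric_general
    {Ω : Type*} [MeasurableSpace Ω] (P : Measure Ω)
    (ρ α : ℝ) (hρ : ρ ∈ Set.Ioo (0 : ℝ) 1) (hα : 0 < α)
    (v : ℕ → Ω → ℝ) (k : ℕ → Ω → ℕ)
    (hvmeas : ∀ t, Measurable (v t)) (hkmeas : ∀ n, Measurable (k n))
    (hae : ∀ᵐ ω ∂P, StrictMono (fun n => k n ω) ∧ k 0 ω = 0 ∧
      IsCycleLyapunov ρ α (fun n => k n ω) (fun t => v t ω))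
    (hindep : ProbabilityTheory.Indep
      (MeasurableSpace.comap (v 0) inferInstance)
      (⨆ n : ℕ, MeasurableSpace.comap (fun ω => k (n + 1) ω - k n ω) inferInstance) P)
    (hv0 : (∫⁻ ω, ENNReal.ofReal (v 0 ω) ∂P) < ⊤)
    (μ : ℝ) (K : ℕ) (q : ℝ) (hq : q ∈ Set.Ioo (0 : ℝ) 1)
    (hgeom : ∀ n : ℕ, K < n →
      (∫⁻ ω, ENNReal.ofReal (Xi ρ α (fun m => k m ω) n) ∂P) ≤
        ENNReal.ofReal (μ * q ^ (n - 1)))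
    (hfin : ∀ n : ℕ, n ≤ K →
      (∫⁻ ω, ENNReal.ofReal (Xi ρ α (fun m => k m ω) n) ∂P) < ⊤) :
    (∑' t : ℕ, ∫⁻ ω, ENNReal.ofReal (v t ω) ∂P) < ⊤ := by
  have hΔ := iSup_le fun n => ((hkmeas (n + 1)).sub (hkmeas n)).comap_le
  set S : Ω → ℝ≥0∞ := fun ω => ∑' n, ENNReal.ofReal (Xi ρ α (fun m => k m ω) n)
  have hS : ∫⁻ ω, S ω ∂P < ⊤ := by
    rw [lintegral_tsum fun n =>
      ((measurable_Xi k ρ α n).ennreal_ofReal.mono hΔ le_rfl).aemeasurable]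
    refine ENNReal.tsum_lt_top_of_le_geometric (ENNReal.ofReal_ne_top (r := μ))
      (ENNReal.ofReal_lt_one.2 hq.2) hfin fun n hn => (hgeom n hn).trans_eq ?_
    rw [ENNReal.ofReal_mul' (pow_nonneg hq.1.le _), ENNReal.ofReal_pow hq.1.le]
  have hprod : ∫⁻ ω, ENNReal.ofReal (v 0 ω) * S ω ∂P
      = (∫⁻ ω, ENNReal.ofReal (v 0 ω) ∂P) * ∫⁻ ω, S ω ∂P :=
    ProbabilityTheory.lintegral_mul_eq_lintegral_mul_lintegral_of_independent_measurableSpace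
      (hvmeas 0).comap_le hΔ hindep (comap_measurable _).ennreal_ofReal
      (measurable_tsum_ofReal_Xi k ρ α)
  calc ∑' t, ∫⁻ ω, ENNReal.ofReal (v t ω) ∂P = ∫⁻ ω, ∑' t, ENNReal.ofReal (v t ω) ∂P :=
        (lintegral_tsum fun t => (hvmeas t).ennreal_ofReal.aemeasurable).symm
    _ ≤ ∫⁻ ω, ENNReal.ofReal (v 0 ω) + ENNReal.ofReal (α / (1 - ρ)) *
          (ENNReal.ofReal (v 0 ω) * S ω) ∂P :=
        lintegral_mono_ae <| hae.mono fun ω ⟨hk, hk0, hL⟩ =>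
          hL.tsum_ofReal_le hρ.1.le hρ.2 hα.le hk hk0
    _ = (∫⁻ ω, ENNReal.ofReal (v 0 ω) ∂P) + ENNReal.ofReal (α / (1 - ρ)) *
          ((∫⁻ ω, ENNReal.ofReal (v 0 ω) ∂P) * ∫⁻ ω, S ω ∂P) := by
        rw [lintegral_add_left (hvmeas 0).ennreal_ofReal, lintegral_const_mul', hprod]
        exact ENNReal.ofReal_ne_top
    _ < ⊤ := ENNReal.add_lt_top.2
        ⟨hv0, ENNReal.mul_lt_top ENNReal.ofReal_lt_top (ENNReal.mul_lt_top hv0 hS)⟩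

theorem stability_from_eventually_geometric
    {Ω : Type*} [MeasurableSpace Ω] (P : Measure Ω) [IsProbabilityMeasure P]
    (ρ α : ℝ) (hρ : ρ ∈ Set.Ioo (0 : ℝ) 1) (hα : 0 < α)
    (v : ℕ → Ω → ℝ) (k : ℕ → Ω → ℕ)
    (hvmeas : ∀ t, Measurable (v t)) (hkmeas : ∀ n, Measurable (k n))
    (hvnn : ∀ t ω, 0 ≤ v t ω)
    (hae : ∀ᵐ ω ∂P, StrictMono (fun n => k n ω) ∧ k 0 ω = 0 ∧
      IsCycleLyapunov ρ α (fun n => k n ω) (fun t => v t ω))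
    (hindep : ProbabilityTheory.Indep
      (MeasurableSpace.comap (v 0) inferInstance)
      (⨆ n : ℕ, MeasurableSpace.comap (fun ω => k (n + 1) ω - k n ω) inferInstance) P)
    (hv0 : (∫⁻ ω, ENNReal.ofReal (v 0 ω) ∂P) < ⊤)
    (μ : ℝ) (hμ : 0 < μ) (K : ℕ) (q : ℝ) (hq : q ∈ Set.Ioo (0 : ℝ) 1)
    (hgeom : ∀ n : ℕ, K < n →
      (∫⁻ ω, ENNReal.ofReal (Xi ρ α (fun m => k m ω) n) ∂P) ≤
        ENNReal.ofReal (μ * q ^ (n - 1)))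
    (hfin : ∀ n : ℕ, n ≤ K →
      (∫⁻ ω, ENNReal.ofReal (Xi ρ α (fun m => k m ω) n) ∂P) < ⊤) :
    (∑' t : ℕ, ∫⁻ ω, ENNReal.ofReal (v t ω) ∂P) < ⊤ :=
  stability_from_eventually_geometric_general P ρ α hρ hα v k hvmeas hkmeas hae hindep hv0 μ K q hq
    hgeom hfin
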